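/- arXiv:2111.00838 — 2 statements merged into one kernel-verified Lean document; each statement's English description precedes it below -/
import Mathlib

section
/- Let n ≥ 2 be even and m ≥ 1 be odd. Then the filiform Lie superalgebra L^{n,m} over 𝕂 admits a closed anti-symmetric non-degenerate even (orthosymplectic) bilinear form; hence L^{n,m} is an orthosymplectic quasi-Frobenius Lie superalgebra. -/
noncomputable section

/-- The sign `(−1)^{ij}` for parities `i, j` encoded as booleans
(`false` = even, `true` = odd). -/
def ssign (K : Type*) [Field K] (i j : Bool) : K := if i && j then -1 else 1

section Defs

variable (K : Type*) [Field K]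

/-- A map `f : V → V → W` is bilinear over `K`. -/
def IsBilinMap (V W : Type*) [AddCommGroup V] [Module K V] [AddCommGroup W] [Module K W]
    (f : V → V → W) : Prop :=
  (∀ x y z : V, f (x + y) z = f x z + f y z) ∧
  (∀ (c : K) (x y : V), f (c • x) y = c • f x y) ∧
  (∀ x y z : V, f x (y + z) = f x y + f x z) ∧
  (∀ (c : K) (x y : V), f x (c • y) = c • f x y)

variable (V : Type*) [AddCommGroup V] [Module K V]

/-- A Lie superalgebra structure over `K` on the `ℤ/2`-graded space `V`,
with homogeneous components `sub false` (even part) and `sub true` (odd part),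
and bracket `br`.  Includes super anti-commutativity, the super Jacobi identity,
and (when `char K = 3`) the extra cubic condition on odd elements. -/
structure IsLieSuperAlg (sub : Bool → Submodule K V) (br : V → V → V) : Prop where
  compl : IsCompl (sub false) (sub true)
  bilin : IsBilinMap K V V br
  graded : ∀ i j : Bool, ∀ x ∈ sub i, ∀ y ∈ sub j, br x y ∈ sub (Bool.xor i j)
  antisymm : ∀ i j : Bool, ∀ x ∈ sub i, ∀ y ∈ sub j, br y x = -(ssign K i j • br x y)
  jacobi : ∀ i j k : Bool, ∀ x ∈ sub i, ∀ y ∈ sub j, ∀ z ∈ sub k,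
    ssign K i k • br x (br y z) + ssign K j i • br y (br z x) + ssign K k j • br z (br x y) = 0
  jacobi3 : ringChar K = 3 → ∀ f ∈ sub true, br f (br f f) = 0

/-- Graded anti-symmetry of a bilinear form: `ω(y,x) = -(-1)^{p(x)p(y)} ω(x,y)`. -/
def IsSuperSkew (sub : Bool → Submodule K V) (ω : V → V → K) : Prop :=
  ∀ i j : Bool, ∀ x ∈ sub i, ∀ y ∈ sub j, ω y x = -(ssign K i j * ω x y)

/-- Closedness (2-cocycle condition) of a bilinear form with respect to a bracket. -/
def IsClosedForm (sub : Bool → Submodule K V) (br : V → V → V) (ω : V → V → K) : Prop :=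
  ∀ i j k : Bool, ∀ x ∈ sub i, ∀ y ∈ sub j, ∀ z ∈ sub k,
    ssign K i k * ω x (br y z) + ssign K k j * ω z (br x y) + ssign K j i * ω y (br z x) = 0

/-- Non-degeneracy of a bilinear form. -/
def IsNondegForm (ω : V → V → K) : Prop := ∀ x : V, (∀ y : V, ω x y = 0) → x = 0

/-- A bilinear form is even if it vanishes on pairs of homogeneous elements
of opposite parity. -/
def IsEvenForm (sub : Bool → Submodule K V) (ω : V → V → K) : Prop :=
  ∀ x y : V, (x ∈ sub false ∧ y ∈ sub true) ∨ (x ∈ sub true ∧ y ∈ sub false) → ω x y = 0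

/-- A bilinear form is odd if it vanishes on pairs of homogeneous elements
of the same parity. -/
def IsOddForm (sub : Bool → Submodule K V) (ω : V → V → K) : Prop :=
  ∀ i : Bool, ∀ x ∈ sub i, ∀ y ∈ sub i, ω x y = 0

/-- `(𝔤, ω)` is quasi-Frobenius: `ω` is a closed anti-symmetric non-degenerate
bilinear form. -/
def IsQuasiFrobenius (sub : Bool → Submodule K V) (br : V → V → V) (ω : V → V → K) : Prop :=
  IsBilinMap K V K ω ∧ IsSuperSkew K V sub ω ∧ IsClosedForm K V sub br ω ∧ IsNondegForm K V ω

end Defs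

/-!
Let `ξ` be the `X₁`-coordinate and `D` the shift `X_i ↦ X_{i+1}`, `Y_j ↦ Y_{j+1}`
(with `X_n, Y_m ↦ 0`). Only brackets with `X₁` survive, so `[x, y] = ξ(x) D y − ξ(y) D x`;
here `D X₁ = X₂` does no harm, as its two contributions cancel. For a bracket of this shape the
cocycle condition of a super-skew form reduces to `D` being skew-adjoint. The anti-diagonal form
`ω(X_i, X_{n+1-i}) = (-1)^(i-1)`, `ω(Y_j, Y_{m+1-j}) = (-1)^(j-1)` (zero on all other pairs of
basis vectors) makes `D` skew-adjoint and is even and non-degenerate; it is anti-symmetric on the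
even part because `n` is even, and symmetric on the odd part because `m` is odd.
-/

open Module

section General

variable {K V : Type*} [Field K] [AddCommGroup V] [Module K V]

theorem ssign_swap_mul_ssign (i j : Bool) : ssign K j i * ssign K i j = 1 := by
  cases i <;> cases j <;> simp [ssign]

theorem LinearMap.isBilinMap {W : Type*} [AddCommGroup W] [Module K W]
    (f : V →ₗ[K] V →ₗ[K] W) : IsBilinMap K V W (fun x y => f x y) :=
  ⟨f.map_add₂, f.map_smul₂, fun x => (f x).map_add, fun c x => (f x).map_smul c⟩

def IsBilinMap.toLinearMap₂ {W : Type*} [AddCommGroup W] [Module K W] {f : V → V → W}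
    (hf : IsBilinMap K V W f) : V →ₗ[K] V →ₗ[K] W :=
  LinearMap.mk₂ K f hf.1 hf.2.1 hf.2.2.1 hf.2.2.2

@[simp]
theorem IsBilinMap.toLinearMap₂_apply {W : Type*} [AddCommGroup W] [Module K W] {f : V → V → W}
    (hf : IsBilinMap K V W f) (x y : V) : hf.toLinearMap₂ x y = f x y :=
  rfl

theorem IsLieSuperAlg.bracket_swap_of_mem_even {sub : Bool → Submodule K V} {br : V → V → V}
    (hL : IsLieSuperAlg K V sub br) {j : Bool} {x y : V} (hx : x ∈ sub false)
    (hy : y ∈ sub j) :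
    br y x = -br x y := by
  simpa [ssign] using hL.antisymm false j x hx y hy

theorem eq_span_image_of_isCompl {ι : Type*} (B : Basis ι K V) (par : ι → Bool)
    {sub : Bool → Submodule K V} (hB : ∀ p, B p ∈ sub (par p))
    (hsub : IsCompl (sub false) (sub true)) (i : Bool) :
    sub i = Submodule.span K (B '' {p | par p = i}) := by
  set S : Bool → Submodule K V := fun b => Submodule.span K (B '' {p | par p = b})
  have hle : ∀ b, S b ≤ sub b := fun b =>
    Submodule.span_le.2 (by rintro _ ⟨p, rfl, rfl⟩; exact hB p)
  have htop : S i ⊔ S (!i) = ⊤ := by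
    have hunion : {p | par p = i} ∪ {p | par p = !i} = Set.univ := by
      ext p; cases par p <;> cases i <;> simp
    rw [← Submodule.span_union, ← Set.image_union, hunion, Set.image_univ, B.span_eq]
  have hdisj : sub (!i) ⊓ sub i = ⊥ := by
    cases i
    · rw [inf_comm]; exact hsub.inf_eq_bot
    · exact hsub.inf_eq_bot
  refine le_antisymm ?_ (hle i)
  calc sub i = (S i ⊔ S (!i)) ⊓ sub i := by rw [htop, top_inf_eq]
    _ = S i ⊔ S (!i) ⊓ sub i := sup_inf_assoc_of_le _ (hle i)
    _ ≤ S i ⊔ sub (!i) ⊓ sub i := sup_le_sup_left (inf_le_inf_right _ (hle _)) _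
    _ = S i := by rw [hdisj, sup_bot_eq]

theorem par_eq_of_repr_ne_zero {ι : Type*} {B : Basis ι K V} {par : ι → Bool}
    {sub : Bool → Submodule K V} (hsub : ∀ i, sub i = Submodule.span K (B '' {p | par p = i}))
    {i : Bool} {x : V} (hx : x ∈ sub i) {p : ι} (hp : B.repr x p ≠ 0) : par p = i := by
  rw [hsub, Basis.mem_span_image] at hx
  exact hx (Finsupp.mem_support_iff.2 hp)

theorem isClosedForm_of_bracket_eq_smul_sub_smul {sub : Bool → Submodule K V} {br : V → V → V}
    (Ω : LinearMap.BilinForm K V) (D : V →ₗ[K] V) (ξ : V →ₗ[K] K)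
    (hΩ : IsSuperSkew K V sub (fun x y => Ω x y)) (hD : ∀ i, ∀ x ∈ sub i, D x ∈ sub i)
    (hξ : ∀ x ∈ sub true, ξ x = 0) (hDΩ : Ω.IsSkewAdjoint D)
    (hbr : ∀ x y, br x y = ξ x • D y - ξ y • D x) :
    IsClosedForm K V sub br (fun x y => Ω x y) := by
  have hsξ : ∀ {j : Bool} {y : V}, y ∈ sub j → ∀ l, ssign K l j * ξ y = ξ y := by
    rintro (_ | _) y hy l
    · cases l <;> simp [ssign]
    · simp [hξ y hy]
  have hswap : ∀ {i j : Bool} {x y : V}, x ∈ sub i → y ∈ sub j →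
      Ω y (D x) = ssign K i j * Ω x (D y) := by
    intro i j x y hx hy
    have h := hΩ i j (D x) (hD i x hx) y hy
    simp only at h
    rw [h, hDΩ, Pi.neg_apply, map_neg]
    ring
  intro i j k x hx y hy z hz
  simp only [hbr, map_sub, map_smul, smul_eq_mul, hswap hx hz, hswap hx hy, hswap hz hy]
  linear_combination (-ssign K i k * Ω x (D z)) * hsξ hy k + (-ssign K k j * Ω z (D y)) * hsξ hx j
    + Ω x (D y) * ξ z * ssign_swap_mul_ssign (K := K) i j - Ω x (D y) * hsξ hz i

theorem bracket_eq_of_basis {ι : Type*} (B : Basis ι K V) (p₀ : ι) (β : V →ₗ[K] V →ₗ[K] V)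
    (D : V →ₗ[K] V) (h₀₀ : β (B p₀) (B p₀) = 0) (h₀ : ∀ q ≠ p₀, β (B p₀) (B q) = D (B q))
    (h₀' : ∀ q ≠ p₀, β (B q) (B p₀) = -D (B q))
    (hrest : ∀ p q, p ≠ p₀ → q ≠ p₀ → β (B p) (B q) = 0) (x y : V) :
    β x y = B.coord p₀ x • D y - B.coord p₀ y • D x := by
  classical
  suffices β = (B.coord p₀).smulRight D - ((B.coord p₀).smulRight D).flip by
    simp [this]
  refine LinearMap.ext_basis B B fun p q => ?_
  by_cases hp : p = p₀ <;> by_cases hq : q = p₀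
  · subst hp hq; simp [h₀₀]
  · subst hp; simp [h₀ q hq, Ne.symm hq]
  · subst hq; simp [h₀' p hp, Ne.symm hp]
  · simp [hrest p q hp hq, Ne.symm hp, Ne.symm hq]

end General

section SignedPairing

variable {K V ι : Type*} [Field K] [AddCommGroup V] [Module K V] [Fintype ι]
  (B : Basis ι K V) (σ : ι → ι) (ε : ι → K)

def signedPairing : LinearMap.BilinForm K V :=
  ∑ p, ε p • (B.coord p).smulRight (B.coord (σ p))

theorem signedPairing_apply (x y : V) :
    signedPairing B σ ε x y = ∑ p, ε p * (B.repr x p * B.repr y (σ p)) := by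
  simp [signedPairing]

theorem signedPairing_basis [DecidableEq ι] (p q : ι) :
    signedPairing B σ ε (B p) (B q) = if σ p = q then ε p else 0 := by
  rw [signedPairing_apply, Finset.sum_eq_single p] <;>
    simp +contextual [Finsupp.single_apply, eq_comm]

variable {B σ ε}

theorem signedPairing_basis_right (hσ : σ.Injective) (x : V) (p : ι) :
    signedPairing B σ ε x (B (σ p)) = ε p * B.repr x p := by
  classical
  simp [signedPairing_apply, Finsupp.single_apply, hσ.eq_iff]

theorem isNondegForm_signedPairing (hσ : σ.Injective) (hε : ∀ p, ε p ≠ 0) :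
    IsNondegForm K V (fun x y => signedPairing B σ ε x y) := by
  intro x hx
  refine B.ext_elem fun p => ?_
  have h := hx (B (σ p))
  simp only at h
  rw [signedPairing_basis_right hσ] at h
  simpa [hε p] using h

variable {sub : Bool → Submodule K V} {par : ι → Bool}

theorem isSuperSkew_signedPairing
    (hsub : ∀ i, sub i = Submodule.span K (B '' {p | par p = i})) (hσ : σ.Involutive)
    (hpar : ∀ p, par (σ p) = par p) (hε : ∀ p, ε (σ p) = -(ssign K (par p) (par p) * ε p)) :
    IsSuperSkew K V sub (fun x y => signedPairing B σ ε x y) := by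
  intro i j x hx y hy
  simp only [signedPairing_apply, Finset.mul_sum, ← Finset.sum_neg_distrib]
  rw [← Equiv.sum_comp hσ.toPerm]
  refine Finset.sum_congr rfl fun q _ => ?_
  simp only [Function.Involutive.coe_toPerm, hσ q]
  by_cases hxq : B.repr x q = 0
  · simp [hxq]
  by_cases hyq : B.repr y (σ q) = 0
  · simp [hyq]
  obtain rfl := par_eq_of_repr_ne_zero hsub hx hxq
  obtain rfl := (hpar q).symm.trans (par_eq_of_repr_ne_zero hsub hy hyq)
  rw [hε]
  ring

theorem isEvenForm_signedPairing
    (hsub : ∀ i, sub i = Submodule.span K (B '' {p | par p = i}))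
    (hpar : ∀ p, par (σ p) = par p) :
    IsEvenForm K V sub (fun x y => signedPairing B σ ε x y) := by
  have key : ∀ i j, i ≠ j → ∀ x ∈ sub i, ∀ y ∈ sub j, signedPairing B σ ε x y = 0 := by
    intro i j hij x hx y hy
    rw [signedPairing_apply]
    refine Finset.sum_eq_zero fun p _ => ?_
    by_contra h
    simp only [mul_ne_zero_iff] at h
    refine hij ?_
    rw [← par_eq_of_repr_ne_zero hsub hx h.2.1, ← par_eq_of_repr_ne_zero hsub hy h.2.2, hpar]
  rintro x y (⟨hx, hy⟩ | ⟨hx, hy⟩)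
  · exact key false true (by decide) x hx y hy
  · exact key true false (by decide) x hx y hy

end SignedPairing

section Filiform

variable {K V : Type*} [Field K] [AddCommGroup V] [Module K V] {n m : ℕ}

def finShift {N : ℕ} (e : Fin N → V) (a : Fin N) : V :=
  if h : (a : ℕ) + 1 < N then e ⟨a + 1, h⟩ else 0

def filiformShift (B : Basis (Fin n ⊕ Fin m) K V) : V →ₗ[K] V :=
  B.constr K (Sum.elim (finShift (B ∘ Sum.inl)) (finShift (B ∘ Sum.inr)))

def filiformForm (B : Basis (Fin n ⊕ Fin m) K V) : LinearMap.BilinForm K V :=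
  signedPairing B (Sum.map Fin.rev Fin.rev)
    (Sum.elim (fun a => (-1) ^ (a : ℕ)) (fun b => (-1) ^ (b : ℕ)))

theorem isSkewAdjoint_filiformShift (B : Basis (Fin n ⊕ Fin m) K V) :
    (filiformForm B).IsSkewAdjoint (filiformShift B) := by
  show LinearMap.IsAdjointPair _ _ _ ⇑(-filiformShift B)
  rw [LinearMap.isAdjointPair_iff_comp_eq_compl₂]
  refine LinearMap.ext_basis B B fun p q => ?_
  rcases p with a | a <;> rcases q with b | b <;>
    simp only [LinearMap.comp_apply, LinearMap.compl₂_apply, LinearMap.neg_apply, map_neg,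
      filiformShift, Basis.constr_basis, Sum.elim_inl, Sum.elim_inr,
      Function.comp_apply, finShift] <;>
    split_ifs <;>
    simp [filiformForm, signedPairing_basis, Fin.ext_iff]
  all_goals (try split_ifs) <;> first | omega | simp [pow_succ]

theorem neg_one_pow_rev {R : Type*} [Ring R] {N : ℕ} (a : Fin N) :
    (-1 : R) ^ (a.rev : ℕ) = (-1) ^ (N - 1) * (-1) ^ (a : ℕ) := by
  have h : N - 1 = a.rev + a := by rw [Fin.val_rev]; omega
  rw [h, pow_add, mul_assoc, ← pow_add, ← two_mul, pow_mul, neg_one_sq, one_pow, mul_one]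

theorem isSuperSkew_filiformForm {sub : Bool → Submodule K V} {B : Basis (Fin n ⊕ Fin m) K V}
    (hn : Even n) (hm : Odd m)
    (hsub : ∀ i, sub i = Submodule.span K (B '' {p | p.isRight = i})) :
    IsSuperSkew K V sub (fun x y => filiformForm B x y) := by
  refine isSuperSkew_signedPairing hsub (by rintro (a | b) <;> simp) (by rintro (a | b) <;> rfl) ?_
  rintro (a | b)
  · have hodd : Odd (n - 1) := Nat.Even.sub_odd a.pos hn odd_one
    simp only [Sum.map_inl, Sum.elim_inl, Sum.isRight_inl, neg_one_pow_rev, hodd.neg_one_pow]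
    simp [ssign]
  · have heven : Even (m - 1) := Nat.Odd.sub_odd hm odd_one
    simp only [Sum.map_inr, Sum.elim_inr, Sum.isRight_inr, neg_one_pow_rev, heven.neg_one_pow]
    simp [ssign]

theorem filiformShift_mem {sub : Bool → Submodule K V} {B : Basis (Fin n ⊕ Fin m) K V}
    (hsub : ∀ i, sub i = Submodule.span K (B '' {p | p.isRight = i})) (i : Bool) (x : V)
    (hx : x ∈ sub i) : filiformShift B x ∈ sub i := by
  rw [hsub] at hx ⊢
  refine (Submodule.span_le (p := (Submodule.span K _).comap (filiformShift B))).2 ?_ hx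
  rintro _ ⟨p, rfl, rfl⟩
  rcases p with a | b <;>
    simp only [Submodule.comap_coe, Set.mem_preimage, filiformShift, Basis.constr_basis,
      Sum.elim_inl, Sum.elim_inr, Function.comp_apply, finShift] <;>
    split_ifs <;>
    first | exact Submodule.zero_mem _ | exact Submodule.subset_span (Set.mem_image_of_mem B rfl)

variable {br : V → V → V} {X Y : ℕ → V} {B : Basis (Fin n ⊕ Fin m) K V}

theorem bracket_basis_eq_filiformShift (hn : 0 < n)
    (hB : ∀ p, B p = Sum.elim (fun i : Fin n => X (i.val + 1)) (fun j : Fin m => Y (j.val + 1)) p)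
    (hbrXX : ∀ i, 2 ≤ i → i ≤ n - 1 → br (X 1) (X i) = X (i + 1))
    (hbrX1n : br (X 1) (X n) = 0)
    (hbrXY : ∀ j, 1 ≤ j → j ≤ m - 1 → br (X 1) (Y j) = Y (j + 1))
    (hbrXYm : br (X 1) (Y m) = 0) (q : Fin n ⊕ Fin m) (hq : q ≠ Sum.inl ⟨0, hn⟩) :
    br (B (Sum.inl ⟨0, hn⟩)) (B q) = filiformShift B (B q) := by
  rcases q with a | b <;>
    simp only [filiformShift, Basis.constr_basis, Sum.elim_inl, Sum.elim_inr, finShift,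
      Function.comp_apply] <;>
    simp only [hB, Sum.elim_inl, Sum.elim_inr, zero_add]
  · have ha : (a : ℕ) ≠ 0 := fun h => hq (congrArg Sum.inl (Fin.ext h))
    split_ifs with h
    · exact hbrXX _ (by omega) (by omega)
    · rw [show (a : ℕ) + 1 = n by omega, hbrX1n]
  · split_ifs with h
    · exact hbrXY _ (by omega) (by omega)
    · rw [show (b : ℕ) + 1 = m by omega, hbrXYm]

theorem bracket_basis_eq_zero {sub : Bool → Submodule K V} (hn : 0 < n)
    (hL : IsLieSuperAlg K V sub br) (hBmem : ∀ p, B p ∈ sub p.isRight)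
    (hB : ∀ p, B p = Sum.elim (fun i : Fin n => X (i.val + 1)) (fun j : Fin m => Y (j.val + 1)) p)
    (hbrXX0 : ∀ i j, 2 ≤ i → i ≤ n → 2 ≤ j → j ≤ n → br (X i) (X j) = 0)
    (hbrXY0 : ∀ i j, 2 ≤ i → i ≤ n → 1 ≤ j → j ≤ m → br (X i) (Y j) = 0)
    (hbrYY : ∀ i j, 1 ≤ i → i ≤ m → 1 ≤ j → j ≤ m → br (Y i) (Y j) = 0)
    (p q : Fin n ⊕ Fin m) (hp : p ≠ Sum.inl ⟨0, hn⟩) (hq : q ≠ Sum.inl ⟨0, hn⟩) :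
    br (B p) (B q) = 0 := by
  have hpos : ∀ a : Fin n, Sum.inl a ≠ (Sum.inl ⟨0, hn⟩ : Fin n ⊕ Fin m) → (a : ℕ) ≠ 0 :=
    fun a h ha => h (congrArg Sum.inl (Fin.ext ha))
  rcases p with a | a <;> rcases q with b | b
  · simpa [hB] using hbrXX0 _ _ (by have := hpos a hp; omega) (by omega)
      (by have := hpos b hq; omega) (by omega)
  · simpa [hB] using hbrXY0 _ _ (by have := hpos a hp; omega) (by omega) (by omega) (by omega)
  · rw [hL.bracket_swap_of_mem_even (hBmem (Sum.inl b)) (hBmem _), neg_eq_zero]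
    simpa [hB] using hbrXY0 _ _ (by have := hpos b hq; omega) (by omega) (by omega) (by omega)
  · simpa [hB] using hbrYY _ _ (by omega) (by omega) (by omega) (by omega)

end Filiform

theorem filiform_orthosymplectic_exists_general
    (K V : Type*) [Field K] [AddCommGroup V] [Module K V]
    (n m : ℕ) (hn2 : 2 ≤ n) (hneven : Even n) (hmodd : Odd m)
    (sub : Bool → Submodule K V) (br : V → V → V)
    (hLie : IsLieSuperAlg K V sub br)
    (X Y : ℕ → V)
    (hXeven : ∀ i, 1 ≤ i → i ≤ n → X i ∈ sub false)
    (hYodd : ∀ j, 1 ≤ j → j ≤ m → Y j ∈ sub true)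
    (hind : LinearIndependent K
      (Sum.elim (fun i : Fin n => X (i.val + 1)) (fun j : Fin m => Y (j.val + 1))))
    (hspan : ⊤ ≤ Submodule.span K (Set.range
      (Sum.elim (fun i : Fin n => X (i.val + 1)) (fun j : Fin m => Y (j.val + 1)))))
    (hbrXX : ∀ i, 2 ≤ i → i ≤ n - 1 → br (X 1) (X i) = X (i + 1))
    (hbrX1n : br (X 1) (X n) = 0)
    (hbrX11 : br (X 1) (X 1) = 0)
    (hbrXX0 : ∀ i j, 2 ≤ i → i ≤ n → 2 ≤ j → j ≤ n → br (X i) (X j) = 0)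
    (hbrXY : ∀ j, 1 ≤ j → j ≤ m - 1 → br (X 1) (Y j) = Y (j + 1))
    (hbrXYm : br (X 1) (Y m) = 0)
    (hbrXY0 : ∀ i j, 2 ≤ i → i ≤ n → 1 ≤ j → j ≤ m → br (X i) (Y j) = 0)
    (hbrYY : ∀ i j, 1 ≤ i → i ≤ m → 1 ≤ j → j ≤ m → br (Y i) (Y j) = 0) :
    ∃ ω : V → V → K, IsBilinMap K V K ω ∧ IsClosedForm K V sub br ω ∧
      IsSuperSkew K V sub ω ∧ IsNondegForm K V ω ∧ IsEvenForm K V sub ω := by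
  have hn : 0 < n := by omega
  set B := Basis.mk hind hspan
  have hB : ∀ p, B p =
      Sum.elim (fun i : Fin n => X (i.val + 1)) (fun j : Fin m => Y (j.val + 1)) p :=
    Basis.mk_apply hind hspan
  have hBmem : ∀ p, B p ∈ sub p.isRight := by
    rintro (a | b) <;> simp only [hB, Sum.elim_inl, Sum.elim_inr, Sum.isRight_inl, Sum.isRight_inr]
    exacts [hXeven _ (by omega) a.isLt, hYodd _ (by omega) b.isLt]
  have hsub := eq_span_image_of_isCompl B Sum.isRight hBmem hLie.compl
  have hskew := isSuperSkew_filiformForm hneven hmodd hsub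
  have hσ : (Sum.map Fin.rev Fin.rev : Fin n ⊕ Fin m → _).Involutive := by
    rintro (a | b) <;> simp
  refine ⟨fun x y => filiformForm B x y, LinearMap.isBilinMap _, ?_, hskew,
    isNondegForm_signedPairing hσ.injective (by rintro (a | b) <;> simp),
    isEvenForm_signedPairing hsub (by rintro (a | b) <;> rfl)⟩
  have h₀ := bracket_basis_eq_filiformShift hn hB hbrXX hbrX1n hbrXY hbrXYm
  refine isClosedForm_of_bracket_eq_smul_sub_smul _ (filiformShift B) (B.coord (Sum.inl ⟨0, hn⟩))
    hskew (filiformShift_mem hsub) (fun x hx => ?_) (isSkewAdjoint_filiformShift B)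
    (bracket_eq_of_basis B _ hLie.bilin.toLinearMap₂ _ (by simpa [hB] using hbrX11) h₀
      (fun q hq => ?_) (bracket_basis_eq_zero hn hLie hBmem hB hbrXX0 hbrXY0 hbrYY))
  · by_contra h
    simpa using par_eq_of_repr_ne_zero hsub hx h
  · rw [← h₀ q hq]
    exact hLie.bracket_swap_of_mem_even (hBmem (Sum.inl _)) (hBmem q)

/-- For `n ≥ 2` even and `m ≥ 1` odd, the filiform Lie superalgebra
`L^{n,m}` admits a closed anti-symmetric non-degenerate **even** (orthosymplectic)
bilinear form; hence it is an orthosymplectic quasi-Frobenius Lie superalgebra. -/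
theorem filiform_orthosymplectic_exists
    (K V : Type*) [Field K] [AddCommGroup V] [Module K V]
    (hchar : ringChar K ≠ 2)
    (n m : ℕ) (hn2 : 2 ≤ n) (hneven : Even n) (hm1 : 1 ≤ m) (hmodd : Odd m)
    (sub : Bool → Submodule K V) (br : V → V → V)
    (hLie : IsLieSuperAlg K V sub br)
    (X Y : ℕ → V)
    (hXeven : ∀ i, 1 ≤ i → i ≤ n → X i ∈ sub false)
    (hYodd : ∀ j, 1 ≤ j → j ≤ m → Y j ∈ sub true)
    (hind : LinearIndependent K
      (Sum.elim (fun i : Fin n => X (i.val + 1)) (fun j : Fin m => Y (j.val + 1))))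
    (hspan : ⊤ ≤ Submodule.span K (Set.range
      (Sum.elim (fun i : Fin n => X (i.val + 1)) (fun j : Fin m => Y (j.val + 1)))))
    (hbrXX : ∀ i, 2 ≤ i → i ≤ n - 1 → br (X 1) (X i) = X (i + 1))
    (hbrX1n : br (X 1) (X n) = 0)
    (hbrX11 : br (X 1) (X 1) = 0)
    (hbrXX0 : ∀ i j, 2 ≤ i → i ≤ n → 2 ≤ j → j ≤ n → br (X i) (X j) = 0)
    (hbrXY : ∀ j, 1 ≤ j → j ≤ m - 1 → br (X 1) (Y j) = Y (j + 1))
    (hbrXYm : br (X 1) (Y m) = 0)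
    (hbrXY0 : ∀ i j, 2 ≤ i → i ≤ n → 1 ≤ j → j ≤ m → br (X i) (Y j) = 0)
    (hbrYY : ∀ i j, 1 ≤ i → i ≤ m → 1 ≤ j → j ≤ m → br (Y i) (Y j) = 0) :
    ∃ ω : V → V → K, IsBilinMap K V K ω ∧ IsClosedForm K V sub br ω ∧
      IsSuperSkew K V sub ω ∧ IsNondegForm K V ω ∧ IsEvenForm K V sub ω :=
  filiform_orthosymplectic_exists_general K V n m hn2 hneven hmodd sub br hLie X Y hXeven hYodd hind
    hspan hbrXX hbrX1n hbrX11 hbrXX0 hbrXY hbrXYm hbrXY0 hbrYY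
end
end

section
/- Let (𝔞,ω_𝔞) be a periplectic quasi-Frobenius Lie superalgebra over 𝕂, let D be an odd derivation of 𝔞 with adjoint D*, and suppose there exists an even element a₀ ∈ 𝔞 such that D∘D = ad_{a₀} (i.e. D(D(a)) = [a₀,a]_𝔞 for all a), D(a₀) = D*(a₀) = 0, and ω_𝔞((D∘D − D*∘D*)(a), b) = ω_𝔞(a₀, [a,b]_𝔞) for all a,b ∈ 𝔞. Then on 𝔤 = 𝕂x ⊕ 𝔞 ⊕ 𝕂e, with x even and e odd, the brackets [x,y]_𝔤 = 0 for all y ∈ 𝔤, [a,b]_𝔤 = [a,b]_𝔞 + (ω_𝔞(D(a),b) + (−1)^{p(a)}ω_𝔞(a,D(b)))·x, [e,e]_𝔤 = 2a₀, and [e,a]_𝔤 = D(a) + ω_𝔞(a₀,a)·x for a,b ∈ 𝔞, define a Lie superalgebra structure; moreover the odd bilinear form ω_𝔤 determined by ω_𝔤|_{𝔞×𝔞} = ω_𝔞, ω_𝔤(𝔞,x) = ω_𝔤(𝔞,e) = 0, ω_𝔤(e,x) = 1, and ω_𝔤(x,x) = ω_𝔤(e,e) = 0 is a closed anti-symmetric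 non-degenerate form, so (𝔤,ω_𝔤) is a periplectic quasi-Frobenius Lie superalgebra. -/
noncomputable section

section DoubleExtension

variable (K A : Type*) [Field K] [AddCommGroup A] [Module K A]

/-- The grading of the double extension `𝕂x ⊕ 𝔞 ⊕ 𝕂x*` of a graded space `𝔞`,
in coordinates `(s, a, t) = s·x + a + t·x*`, where `x` has parity `xpar` and
`x*` has parity `epar`. -/
def dblSub (subA : Bool → Submodule K A) (xpar epar : Bool) :
    Bool → Submodule K (K × A × K) := fun i =>
  ((if i = xpar then (⊤ : Submodule K K) else ⊥)).prod
    ((subA i).prod (if i = epar then (⊤ : Submodule K K) else ⊥))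

/-- The bracket of the `𝒟`-even double extension (orthosymplectic case), in coordinates
`(s, a, t) = s·x + a + t·x*`:  `[x, 𝕂x ⊕ 𝔞] = 0`, `[x,x*] = λx`,
`[a,b] = [a,b]_𝔞 + ω_𝔞(D a + D* a, b)·x`, `[x*,a] = D a + ω_𝔞(Z, a)·x`. -/
def dblBrEvenO (brA : A → A → A) (ωA : A → A → K) (D Ds : A → A) (lam : K) (Z : A) :
    K × A × K → K × A × K → K × A × K := fun p q =>
  (p.1 * q.2.2 * lam - p.2.2 * q.1 * lam + ωA (D p.2.1 + Ds p.2.1) q.2.1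
      + p.2.2 * ωA Z q.2.1 - q.2.2 * ωA Z p.2.1,
   brA p.2.1 q.2.1 + p.2.2 • D q.2.1 - q.2.2 • D p.2.1,
   0)

/-- The bracket of the `𝒟`-even double extension (periplectic case), in coordinates
`(s, a, t) = s·x + a + t·e`:  `[x, 𝕂x ⊕ 𝔞] = 0`, `[x,e] = λx`,
`[a,b] = [a,b]_𝔞 + (ω_𝔞(D a, b) + ω_𝔞(a, D b))·x`, `[e,a] = D a + ω_𝔞(Z, a)·x`. -/
def dblBrEvenP (brA : A → A → A) (ωA : A → A → K) (D : A → A) (lam : K) (Z : A) :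
    K × A × K → K × A × K → K × A × K := fun p q =>
  (p.1 * q.2.2 * lam - p.2.2 * q.1 * lam + ωA (D p.2.1) q.2.1 + ωA p.2.1 (D q.2.1)
      + p.2.2 * ωA Z q.2.1 - q.2.2 * ωA Z p.2.1,
   brA p.2.1 q.2.1 + p.2.2 • D q.2.1 - q.2.2 • D p.2.1,
   0)

/-- The form of a double extension when the two new generators do not have the same
odd parity: `ω|_{𝔞×𝔞} = ω_𝔞`, the new generators are isotropic and orthogonal to `𝔞`,
and the pairing of the two new generators is `ω(x*, x) = 1`, `ω(x, x*) = −1`. -/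
def dblFormMinus (ωA : A → A → K) : K × A × K → K × A × K → K :=
  fun p q => ωA p.2.1 q.2.1 + p.2.2 * q.1 - p.1 * q.2.2

/-- The form of a double extension when the two new generators are both odd:
`ω|_{𝔞×𝔞} = ω_𝔞`, the new generators are isotropic and orthogonal to `𝔞`, and
`ω(x*, x) = 1 = ω(x, x*)`. -/
def dblFormPlus (ωA : A → A → K) : K × A × K → K × A × K → K :=
  fun p q => ωA p.2.1 q.2.1 + p.2.2 * q.1 + p.1 * q.2.2

end DoubleExtension

/-!
`𝔤` is the central extension by `𝕂x` of `𝔥 = 𝔞 ⊕ 𝕂e`, the odd extension of `𝔞` with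
`[e, a] = 𝒟a` and `[e, e] = 2a₀`, along the cocycle `c(u, v) = ω(𝒟u, v) + (-1)^{p(u)} ω(u, 𝒟v)`,
`c(e, a) = c(a, e) = ω(a₀, a)`. So `𝔤` is a Lie superalgebra as soon as `𝔥` is one (which is
where `𝒟² = ad_{a₀}` and `𝒟a₀ = 0` enter) and `c` is closed. On triples `(a, b, e)` the
closedness of `c` is exactly the condition on `𝒟² - 𝒟*²`, once `(𝒟*)² = -(𝒟²)*` is used.
All Jacobi and closedness sums are trilinear and cyclic, so it suffices to check them on the
generators `a ∈ 𝔞` and `e`, i.e. on `(a, b, c)`, `(a, b, e)`, `(a, e, e)` and `(e, e, e)`.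
An odd super-skew form is plainly skew-symmetric, which makes the anti-symmetry and the
non-degeneracy of `ω_𝔤` immediate.
-/

section Signs

variable (K : Type*) [Field K]

@[simp] theorem ssign_false_left (j : Bool) : ssign K false j = 1 := rfl

@[simp] theorem ssign_false_right (i : Bool) : ssign K i false = 1 := by cases i <;> rfl

@[simp] theorem ssign_true_true : ssign K true true = -1 := rfl

end Signs

namespace IsBilinMap

variable {K V W : Type*} [Field K] [AddCommGroup V] [Module K V] [AddCommGroup W] [Module K W]
  {f : V → V → W}

theorem map_zero_left (h : IsBilinMap K V W f) (y : V) : f 0 y = 0 := by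
  simpa using h.2.1 0 0 y

theorem map_zero_right (h : IsBilinMap K V W f) (x : V) : f x 0 = 0 := by
  simpa using h.2.2.2 0 x 0

theorem map_neg_left (h : IsBilinMap K V W f) (x y : V) : f (-x) y = -f x y := by
  simpa using h.2.1 (-1) x y

theorem map_neg_right (h : IsBilinMap K V W f) (x y : V) : f x (-y) = -f x y := by
  simpa using h.2.2.2 (-1) x y

theorem map_sub_right (h : IsBilinMap K V W f) (x y z : V) : f x (y - z) = f x y - f x z := by
  rw [sub_eq_add_neg, h.2.2.1, h.map_neg_right, sub_eq_add_neg]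

theorem map_sub_left (h : IsBilinMap K V W f) (x y z : V) : f (x - y) z = f x z - f y z := by
  rw [sub_eq_add_neg, h.1, ← neg_one_smul K y, h.2.1, neg_one_smul, sub_eq_add_neg]

end IsBilinMap

theorem Submodule.isCompl_prod {K M N : Type*} [Field K] [AddCommGroup M] [Module K M]
    [AddCommGroup N] [Module K N] {p q : Submodule K M} {p' q' : Submodule K N}
    (h : IsCompl p q) (h' : IsCompl p' q') : IsCompl (p.prod p') (q.prod q') := by
  constructor
  · rw [disjoint_iff, Submodule.prod_inf_prod, h.inf_eq_bot, h'.inf_eq_bot, Submodule.prod_bot]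
  · rw [codisjoint_iff, Submodule.prod_sup_prod, h.sup_eq_top, h'.sup_eq_top, Submodule.prod_top]

namespace IsOddForm

variable {K V : Type*} [Field K] [AddCommGroup V] [Module K V] {sub : Bool → Submodule K V}
  {ω : V → V → K}

theorem apply_swap_of_mem (hodd : IsOddForm K V sub ω) (hskew : IsSuperSkew K V sub ω)
    {i j : Bool} {x y : V} (hx : x ∈ sub i) (hy : y ∈ sub j) : ω y x = -ω x y := by
  cases i <;> cases j
  · rw [hodd _ _ hy _ hx, hodd _ _ hx _ hy, neg_zero]
  · simpa using hskew _ _ _ hx _ hy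
  · simpa using hskew _ _ _ hx _ hy
  · rw [hodd _ _ hy _ hx, hodd _ _ hx _ hy, neg_zero]

theorem apply_swap (hodd : IsOddForm K V sub ω) (hskew : IsSuperSkew K V sub ω)
    (hcompl : IsCompl (sub false) (sub true)) (hω : IsBilinMap K V K ω) (x y : V) :
    ω y x = -ω x y := by
  obtain ⟨⟨x₀, hx₀⟩, ⟨x₁, hx₁⟩, rfl, -⟩ := Submodule.existsUnique_add_of_isCompl hcompl x
  obtain ⟨⟨y₀, hy₀⟩, ⟨y₁, hy₁⟩, rfl, -⟩ := Submodule.existsUnique_add_of_isCompl hcompl y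
  simp only [hω.1, hω.2.2.1]
  rw [hodd.apply_swap_of_mem hskew hx₀ hy₀, hodd.apply_swap_of_mem hskew hx₀ hy₁,
    hodd.apply_swap_of_mem hskew hx₁ hy₀, hodd.apply_swap_of_mem hskew hx₁ hy₁]
  ring

theorem isSuperSkew (hodd : IsOddForm K V sub ω) (hswap : ∀ x y, ω y x = -ω x y) :
    IsSuperSkew K V sub ω := by
  intro i j x hx y hy
  cases i <;> cases j
  · rw [hodd _ _ hy _ hx, hodd _ _ hx _ hy]; simp
  · simpa using hswap x y
  · simpa using hswap x y
  · rw [hodd _ _ hy _ hx, hodd _ _ hx _ hy]; simp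

end IsOddForm

section Adjoint

variable {K A : Type*} [Field K] [AddCommGroup A] [Module K A] {subA : Bool → Submodule K A}

theorem adjoint_adjoint_eq_neg {ωA : A → A → K} {D Ds : A → A}
    (hD : ∀ i, ∀ a ∈ subA i, D a ∈ subA (!i))
    (hDs : ∀ i, ∀ f ∈ subA i, ∀ g, ωA (D f) g = ssign K i true * ωA f (Ds g))
    (hswap : ∀ x y, ωA y x = -ωA x y) (a : A) {j : Bool} {b : A} (hb : b ∈ subA j) :
    ωA (Ds (Ds a)) b = -ωA a (D (D b)) := by
  have h₁ := hDs j b hb (Ds a)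
  have h₂ := hDs _ _ (hD j b hb) a
  rw [hswap b, hswap (D (D b)) a]
  cases j <;> simp only [ssign_false_left, ssign_true_true, Bool.not_false, Bool.not_true, one_mul,
    neg_one_mul] at h₁ h₂
  · linear_combination h₁ - h₂
  · linear_combination -h₁ - h₂

theorem apply_map_eq_zero_of_adjoint_eq_zero {ωA : A → A → K} {D Ds : A → A}
    (hω : IsBilinMap K A K ωA)
    (hDs : ∀ i, ∀ f ∈ subA i, ∀ g, ωA (D f) g = ssign K i true * ωA f (Ds g))
    (hswap : ∀ x y, ωA y x = -ωA x y) {a : A} (ha : Ds a = 0) {i : Bool} {f : A}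
    (hf : f ∈ subA i) : ωA a (D f) = 0 := by
  rw [hswap, hDs i f hf a, ha, hω.map_zero_right, mul_zero, neg_zero]

end Adjoint

section CyclicSums

variable (K : Type*) [Field K] {V : Type*}

/-- The cyclic sums of `IsLieSuperAlg.jacobi` and of `IsClosedForm`. -/
def superJacobiator [AddCommGroup V] [Module K V] (br : V → V → V) (i j k : Bool)
    (x y z : V) : V :=
  ssign K i k • br x (br y z) + ssign K j i • br y (br z x) + ssign K k j • br z (br x y)

def cocycleSum (br : V → V → V) (ω : V → V → K) (i j k : Bool) (x y z : V) : K :=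
  ssign K i k * ω x (br y z) + ssign K k j * ω z (br x y) + ssign K j i * ω y (br z x)

variable {K} {br : V → V → V} {ω : V → V → K}

theorem cocycleSum_cyclic (i j k : Bool) (x y z : V) :
    cocycleSum K br ω i j k x y z = cocycleSum K br ω j k i y z x := by
  unfold cocycleSum; ring

variable [AddCommGroup V] [Module K V]

theorem superJacobiator_cyclic (i j k : Bool) (x y z : V) :
    superJacobiator K br i j k x y z = superJacobiator K br j k i y z x := by
  unfold superJacobiator; abel

theorem superJacobiator_add_left (hbr : IsBilinMap K V V br) (i j k : Bool) (x x' y z : V) :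
    superJacobiator K br i j k (x + x') y z =
      superJacobiator K br i j k x y z + superJacobiator K br i j k x' y z := by
  simp only [superJacobiator, hbr.1, hbr.2.2.1]; module

theorem superJacobiator_smul_left (hbr : IsBilinMap K V V br) (i j k : Bool) (c : K) (x y z : V) :
    superJacobiator K br i j k (c • x) y z = c • superJacobiator K br i j k x y z := by
  simp only [superJacobiator, hbr.2.1, hbr.2.2.2]; module

theorem cocycleSum_add_left (hbr : IsBilinMap K V V br) (hω : IsBilinMap K V K ω)
    (i j k : Bool) (x x' y z : V) :
    cocycleSum K br ω i j k (x + x') y z =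
      cocycleSum K br ω i j k x y z + cocycleSum K br ω i j k x' y z := by
  simp only [cocycleSum, hbr.1, hbr.2.2.1, hω.1, hω.2.2.1]; ring

theorem cocycleSum_smul_left (hbr : IsBilinMap K V V br) (hω : IsBilinMap K V K ω)
    (i j k : Bool) (c : K) (x y z : V) :
    cocycleSum K br ω i j k (c • x) y z = c • cocycleSum K br ω i j k x y z := by
  simp only [cocycleSum, hbr.2.1, hbr.2.2.2, hω.2.1, hω.2.2.2, smul_eq_mul]; ring

end CyclicSums

section Generators

variable {K A M : Type*} [Field K] [AddCommGroup A] [Module K A] [AddCommGroup M] [Module K M]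

/-- The grading of `𝔞 ⊕ 𝕂e` with `e = (0, 1)` odd. -/
def oddExtSub (subA : Bool → Submodule K A) : Bool → Submodule K (A × K) :=
  fun i => (subA i).prod (if i = true then ⊤ else ⊥)

theorem mem_oddExtSub {subA : Bool → Submodule K A} {i : Bool} {a : A} {t : K} :
    (a, t) ∈ oddExtSub subA i ↔ a ∈ subA i ∧ (i = false → t = 0) := by
  cases i <;> simp [oddExtSub]

def IsOddExtGen (subA : Bool → Submodule K A) (i : Bool) (g : A × K) : Prop :=
  (∃ a ∈ subA i, g = (a, 0)) ∨ (i = true ∧ g = (0, 1))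

theorem eq_zero_of_isOddExtGen {subA : Bool → Submodule K A} {i : Bool} {f : A × K → M}
    (hadd : ∀ x y, f (x + y) = f x + f y) (hsmul : ∀ (c : K) x, f (c • x) = c • f x)
    (hgen : ∀ g, IsOddExtGen subA i g → f g = 0) {x : A × K} (hx : x ∈ oddExtSub subA i) :
    f x = 0 := by
  obtain ⟨a, t⟩ := x
  obtain ⟨ha, ht⟩ := mem_oddExtSub.1 hx
  have hsplit : ((a, t) : A × K) = (a, 0) + t • ((0 : A), (1 : K)) := by ext <;> simp
  rw [hsplit, hadd, hsmul, hgen _ (Or.inl ⟨a, ha, rfl⟩), zero_add]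
  cases i
  · rw [ht rfl, zero_smul]
  · rw [hgen _ (Or.inr ⟨rfl, rfl⟩), smul_zero]

theorem forall_oddExtSub_eq_zero {subA : Bool → Submodule K A}
    {T : Bool → Bool → Bool → A × K → A × K → A × K → M}
    (hadd : ∀ i j k x x' y z, T i j k (x + x') y z = T i j k x y z + T i j k x' y z)
    (hsmul : ∀ i j k (c : K) x y z, T i j k (c • x) y z = c • T i j k x y z)
    (hcyc : ∀ i j k x y z, T i j k x y z = T j k i y z x)
    (hAAA : ∀ i j k, ∀ a ∈ subA i, ∀ b ∈ subA j, ∀ c ∈ subA k,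
      T i j k (a, 0) (b, 0) (c, 0) = 0)
    (hAAE : ∀ i j, ∀ a ∈ subA i, ∀ b ∈ subA j, T i j true (a, 0) (b, 0) (0, 1) = 0)
    (hAEE : ∀ i, ∀ a ∈ subA i, T i true true (a, 0) (0, 1) (0, 1) = 0)
    (hEEE : T true true true (0, 1) (0, 1) (0, 1) = 0) :
    ∀ i j k, ∀ x ∈ oddExtSub subA i, ∀ y ∈ oddExtSub subA j, ∀ z ∈ oddExtSub subA k,
      T i j k x y z = 0 := by
  have hgen : ∀ i j k g₁ g₂ g₃, IsOddExtGen subA i g₁ → IsOddExtGen subA j g₂ →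
      IsOddExtGen subA k g₃ → T i j k g₁ g₂ g₃ = 0 := by
    rintro i j k _ _ _ (⟨a, ha, rfl⟩ | ⟨rfl, rfl⟩) (⟨b, hb, rfl⟩ | ⟨rfl, rfl⟩)
      (⟨c, hc, rfl⟩ | ⟨rfl, rfl⟩)
    · exact hAAA i j k a ha b hb c hc
    · exact hAAE i j a ha b hb
    · rw [hcyc, hcyc]; exact hAAE k i c hc a ha
    · exact hAEE i a ha
    · rw [hcyc]; exact hAAE j k b hb c hc
    · rw [hcyc]; exact hAEE j b hb
    · rw [hcyc, hcyc]; exact hAEE k c hc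
    · exact hEEE
  intro i j k x hx y hy z hz
  refine eq_zero_of_isOddExtGen (f := (T i j k · y z)) (hadd i j k · · y z)
    (hsmul i j k · · y z) (fun g₁ hg₁ => ?_) hx
  rw [hcyc]
  refine eq_zero_of_isOddExtGen (f := (T j k i · z g₁)) (hadd j k i · · z g₁)
    (hsmul j k i · · z g₁) (fun g₂ hg₂ => ?_) hy
  rw [hcyc]
  refine eq_zero_of_isOddExtGen (f := (T k i j · g₁ g₂)) (hadd k i j · · g₁ g₂)
    (hsmul k i j · · g₁ g₂) (fun g₃ hg₃ => ?_) hz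
  rw [hcyc]
  exact hgen i j k g₁ g₂ g₃ hg₁ hg₂ hg₃

end Generators

section CentralExtension

variable {K H : Type*} [Field K] [AddCommGroup H] [Module K H]

/-- The grading of `𝕂x ⊕ 𝔥` with `x = (1, 0)` even. -/
def centralExtSub (subH : Bool → Submodule K H) : Bool → Submodule K (K × H) :=
  fun i => Submodule.prod (if i = false then (⊤ : Submodule K K) else ⊥) (subH i)

/-- The central extension of `𝔥` by the cocycle `c`; `x = (1, 0)` spans the centre. -/
def centralExtBr (brH : H → H → H) (c : H → H → K) : K × H → K × H → K × H :=
  fun p q => (c p.2 q.2, brH p.2 q.2)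

theorem isBilinMap_centralExtBr {brH : H → H → H} {c : H → H → K}
    (hbr : IsBilinMap K H H brH) (hc : IsBilinMap K H K c) :
    IsBilinMap K (K × H) (K × H) (centralExtBr brH c) := by
  obtain ⟨hadd_l, hsmul_l, hadd_r, hsmul_r⟩ := hbr
  refine ⟨fun x y z => ?_, fun a x y => ?_, fun x y z => ?_, fun a x y => ?_⟩ <;>
    simp [centralExtBr, hadd_l, hsmul_l, hadd_r, hsmul_r, hc.1, hc.2.1, hc.2.2.1, hc.2.2.2]

theorem isLieSuperAlg_centralExt {subH : Bool → Submodule K H} {brH : H → H → H}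
    {c : H → H → K} (hH : IsLieSuperAlg K H subH brH) (hc : IsBilinMap K H K c)
    (hskew : IsSuperSkew K H subH c) (heven : IsEvenForm K H subH c)
    (hclosed : IsClosedForm K H subH brH c)
    (h3 : ringChar K = 3 → ∀ f ∈ subH true, c f (brH f f) = 0) :
    IsLieSuperAlg K (K × H) (centralExtSub subH) (centralExtBr brH c) where
  compl := Submodule.isCompl_prod isCompl_top_bot hH.compl
  bilin := isBilinMap_centralExtBr hH.bilin hc
  graded := by
    intro i j x hx y hy
    replace hx := (Submodule.mem_prod.1 hx).2
    replace hy := (Submodule.mem_prod.1 hy).2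
    refine Submodule.mem_prod.2 ⟨?_, hH.graded i j _ hx _ hy⟩
    cases i <;> cases j
    · simp
    · simp [centralExtBr, heven _ _ (.inl ⟨hx, hy⟩)]
    · simp [centralExtBr, heven _ _ (.inr ⟨hx, hy⟩)]
    · simp
  antisymm := by
    intro i j x hx y hy
    replace hx := (Submodule.mem_prod.1 hx).2
    replace hy := (Submodule.mem_prod.1 hy).2
    simp [centralExtBr, hskew i j _ hx _ hy, hH.antisymm i j _ hx _ hy]
  jacobi := by
    intro i j k x hx y hy z hz
    replace hx := (Submodule.mem_prod.1 hx).2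
    replace hy := (Submodule.mem_prod.1 hy).2
    replace hz := (Submodule.mem_prod.1 hz).2
    refine Prod.ext ?_ (hH.jacobi i j k _ hx _ hy _ hz)
    simp only [centralExtBr, Prod.fst_add, Prod.smul_fst, smul_eq_mul, Prod.fst_zero]
    linear_combination hclosed i j k _ hx _ hy _ hz
  jacobi3 := by
    intro hK f hf
    replace hf := (Submodule.mem_prod.1 hf).2
    exact Prod.ext (h3 hK _ hf) (hH.jacobi3 hK _ hf)

end CentralExtension

section OddExtension

variable {K A : Type*} [Field K] [AddCommGroup A] [Module K A]

structure IsOddDerivation (subA : Bool → Submodule K A) (brA : A → A → A) (D : A →ₗ[K] A) :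
    Prop where
  map_mem : ∀ i, ∀ a ∈ subA i, D a ∈ subA (!i)
  leibniz : ∀ i, ∀ f ∈ subA i, ∀ g, D (brA f g) = brA (D f) g + ssign K i true • brA f (D g)

def IsParityInvolution (subA : Bool → Submodule K A) (σ : A →ₗ[K] A) : Prop :=
  ∀ i, ∀ a ∈ subA i, σ a = ssign K i true • a

/-- The bracket of `𝔞 ⊕ 𝕂e` with `e = (0, 1)` odd, `[e, e] = 2a₀` and `[e, a] = D a`. The
parity involution `σ` makes the bracket bilinear: `[a, e] = -(-1)^{p(a)} [e, a] = -D (σ a)`. -/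
def oddExtBr (brA : A → A → A) (D σ : A →ₗ[K] A) (a₀ : A) : A × K → A × K → A × K :=
  fun p q => (brA p.1 q.1 + p.2 • D q.1 - q.2 • D (σ p.1) + (2 * p.2 * q.2) • a₀, 0)

variable {subA : Bool → Submodule K A} {brA : A → A → A} {D σ : A →ₗ[K] A} {a₀ : A}

def parityInvolution (h : IsCompl (subA false) (subA true)) : A →ₗ[K] A :=
  LinearMap.ofIsCompl h (subA false).subtype (-(subA true).subtype)

theorem isParityInvolution_parityInvolution (h : IsCompl (subA false) (subA true)) :
    IsParityInvolution subA (parityInvolution h) := by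
  rintro (_ | _) a ha
  · rw [ssign_false_left, one_smul]
    exact LinearMap.ofIsCompl_apply_left h ⟨a, ha⟩
  · rw [ssign_true_true, neg_one_smul]
    exact LinearMap.ofIsCompl_apply_right h ⟨a, ha⟩

theorem oddExtBr_inl_inl (a b : A) : oddExtBr brA D σ a₀ (a, 0) (b, 0) = (brA a b, 0) := by
  simp [oddExtBr]

theorem oddExtBr_inl_e (hbr : IsBilinMap K A A brA) (a : A) :
    oddExtBr brA D σ a₀ (a, 0) (0, 1) = (-D (σ a), 0) := by
  simp [oddExtBr, hbr.map_zero_right]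

theorem oddExtBr_e_inl (hbr : IsBilinMap K A A brA) (a : A) :
    oddExtBr brA D σ a₀ (0, 1) (a, 0) = (D a, 0) := by
  simp [oddExtBr, hbr.map_zero_left]

theorem oddExtBr_e_e (hbr : IsBilinMap K A A brA) :
    oddExtBr brA D σ a₀ (0, 1) (0, 1) = ((2 : K) • a₀, 0) := by
  simp [oddExtBr, hbr.map_zero_left]

theorem isBilinMap_oddExtBr (hbr : IsBilinMap K A A brA) :
    IsBilinMap K (A × K) (A × K) (oddExtBr brA D σ a₀) := by
  obtain ⟨hadd_l, hsmul_l, hadd_r, hsmul_r⟩ := hbr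
  refine ⟨fun x y z => ?_, fun c x y => ?_, fun x y z => ?_, fun c x y => ?_⟩ <;>
    ext <;> simp only [oddExtBr, Prod.fst_add, Prod.snd_add, Prod.smul_fst, Prod.smul_snd,
      Prod.mk_add_mk, Prod.smul_mk, hadd_l, hsmul_l, hadd_r, hsmul_r, map_add, map_smul, smul_add,
      smul_eq_mul, add_zero, mul_zero] <;> module

theorem oddExtBr_mem (hLie : IsLieSuperAlg K A subA brA) (hD : IsOddDerivation subA brA D)
    (hσ : IsParityInvolution subA σ) (ha₀ : a₀ ∈ subA false) {i j : Bool} {x y : A × K}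
    (hx : x ∈ oddExtSub subA i) (hy : y ∈ oddExtSub subA j) :
    oddExtBr brA D σ a₀ x y ∈ oddExtSub subA (Bool.xor i j) := by
  obtain ⟨a, t⟩ := x
  obtain ⟨b, u⟩ := y
  obtain ⟨ha, ht⟩ := mem_oddExtSub.1 hx
  obtain ⟨hb, hu⟩ := mem_oddExtSub.1 hy
  refine mem_oddExtSub.2 ⟨?_, fun _ => rfl⟩
  have hab := hLie.graded i j a ha b hb
  have hDa := hD.map_mem i a ha
  have hDb := hD.map_mem j b hb
  change brA a b + t • D b - u • D (σ a) + (2 * t * u) • a₀ ∈ _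
  rw [hσ i a ha, map_smul]
  cases i <;> cases j
  · obtain ⟨rfl, rfl⟩ := And.intro (ht rfl) (hu rfl)
    simpa using hab
  · obtain rfl := ht rfl
    simpa using sub_mem hab (Submodule.smul_mem _ u hDa)
  · obtain rfl := hu rfl
    simpa using add_mem hab (Submodule.smul_mem _ t hDb)
  · exact add_mem (sub_mem (add_mem hab (Submodule.smul_mem _ t hDb))
      (Submodule.smul_mem _ u (Submodule.smul_mem _ _ hDa))) (Submodule.smul_mem _ _ ha₀)

theorem oddExtBr_swap (hLie : IsLieSuperAlg K A subA brA) (hσ : IsParityInvolution subA σ)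
    {i j : Bool} {x y : A × K} (hx : x ∈ oddExtSub subA i) (hy : y ∈ oddExtSub subA j) :
    oddExtBr brA D σ a₀ y x = -(ssign K i j • oddExtBr brA D σ a₀ x y) := by
  obtain ⟨a, t⟩ := x
  obtain ⟨b, u⟩ := y
  obtain ⟨ha, ht⟩ := mem_oddExtSub.1 hx
  obtain ⟨hb, hu⟩ := mem_oddExtSub.1 hy
  have hba := hLie.antisymm i j a ha b hb
  simp only [oddExtBr, hσ i a ha, hσ j b hb, map_smul, Prod.smul_mk, Prod.neg_mk, smul_zero,
    neg_zero, Prod.mk.injEq, and_true]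
  cases i <;> cases j <;> simp only [true_implies, Bool.true_eq_false, false_implies] at ht hu <;>
    subst_vars <;>
    simp only [hba, ssign_false_left, ssign_false_right, ssign_true_true] <;> module

theorem superJacobiator_oddExtBr_eq_zero (hLie : IsLieSuperAlg K A subA brA)
    (hD : IsOddDerivation subA brA D) (hσ : IsParityInvolution subA σ) (ha₀ : a₀ ∈ subA false)
    (hDD : ∀ a, D (D a) = brA a₀ a) (hDa₀ : D a₀ = 0) :
    ∀ i j k, ∀ x ∈ oddExtSub subA i, ∀ y ∈ oddExtSub subA j, ∀ z ∈ oddExtSub subA k,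
      superJacobiator K (oddExtBr brA D σ a₀) i j k x y z = 0 := by
  have hbr := hLie.bilin
  have hbr' := isBilinMap_oddExtBr (D := D) (σ := σ) (a₀ := a₀) hbr
  refine forall_oddExtSub_eq_zero (superJacobiator_add_left hbr') (superJacobiator_smul_left hbr')
    superJacobiator_cyclic ?_ ?_ ?_ ?_
  · intro i j k a ha b hb c hc
    simp only [superJacobiator, oddExtBr_inl_inl, Prod.smul_mk, smul_zero, Prod.mk_add_mk,
      add_zero, Prod.mk_eq_zero, and_true]
    exact hLie.jacobi i j k a ha b hb c hc
  · intro i j a ha b hb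
    simp only [superJacobiator, oddExtBr_inl_inl, oddExtBr_inl_e hbr, oddExtBr_e_inl hbr,
      Prod.smul_mk, smul_zero, Prod.mk_add_mk, add_zero, Prod.mk_eq_zero, and_true]
    have hba := hLie.antisymm _ _ _ (hD.map_mem i a ha) b hb
    rw [hσ j b hb, map_smul, ← neg_one_smul K, smul_smul, hbr.2.2.2, hD.leibniz i a ha b, hba]
    cases i <;> cases j <;> simp
  · intro i a ha
    simp only [superJacobiator, oddExtBr_inl_e hbr, oddExtBr_e_inl hbr, oddExtBr_e_e hbr,
      oddExtBr_inl_inl, Prod.smul_mk, smul_zero, Prod.mk_add_mk, add_zero, Prod.mk_eq_zero,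
      and_true]
    have ha₀a := hLie.antisymm _ _ _ ha₀ a ha
    rw [hσ i a ha, map_neg, map_smul, map_smul, hDD, hbr.2.2.2, ha₀a]
    cases i <;> simp only [ssign_false_left, ssign_false_right, ssign_true_true] <;> module
  · simp only [superJacobiator, oddExtBr_e_e hbr, oddExtBr_e_inl hbr, map_smul, hDa₀,
      smul_zero, add_zero, Prod.mk_zero_zero]

theorem oddExtBr_oddExtBr_self_eq_zero (hLie : IsLieSuperAlg K A subA brA)
    (hD : IsOddDerivation subA brA D) (hσ : IsParityInvolution subA σ) (ha₀ : a₀ ∈ subA false)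
    (hDD : ∀ a, D (D a) = brA a₀ a) (hDa₀ : D a₀ = 0) (hK : ringChar K = 3) {f : A × K}
    (hf : f ∈ oddExtSub subA true) :
    oddExtBr brA D σ a₀ f (oddExtBr brA D σ a₀ f f) = 0 := by
  obtain ⟨a, t⟩ := f
  obtain ⟨ha, -⟩ := mem_oddExtSub.1 hf
  have hbr := hLie.bilin
  have hDa_a := hLie.antisymm _ _ _ ha _ (hD.map_mem true a ha)
  have ha₀a := hLie.antisymm _ _ _ ha₀ _ ha
  ext
  · simp only [oddExtBr, hσ true a ha, ssign_true_true, neg_one_smul, map_neg, map_add, map_sub,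
      map_smul, hbr.2.2.1, hbr.2.2.2, hbr.map_sub_right, hbr.map_neg_right, hD.leibniz true a ha,
      hDD, hDa₀, hLie.jacobi3 hK a ha, hDa_a, ha₀a, ssign_false_left, ssign_false_right,
      Bool.not_true, one_smul, smul_zero, Prod.fst_zero]
    module
  · rfl

theorem isLieSuperAlg_oddExt (hLie : IsLieSuperAlg K A subA brA) (hD : IsOddDerivation subA brA D)
    (hσ : IsParityInvolution subA σ) (ha₀ : a₀ ∈ subA false) (hDD : ∀ a, D (D a) = brA a₀ a)
    (hDa₀ : D a₀ = 0) : IsLieSuperAlg K (A × K) (oddExtSub subA) (oddExtBr brA D σ a₀) where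
  compl := Submodule.isCompl_prod hLie.compl isCompl_bot_top
  bilin := isBilinMap_oddExtBr hLie.bilin
  graded _ _ _ hx _ hy := oddExtBr_mem hLie hD hσ ha₀ hx hy
  antisymm _ _ _ hx _ hy := oddExtBr_swap hLie hσ hx hy
  jacobi := superJacobiator_oddExtBr_eq_zero hLie hD hσ ha₀ hDD hDa₀
  jacobi3 hK _ hf := oddExtBr_oddExtBr_self_eq_zero hLie hD hσ ha₀ hDD hDa₀ hK hf

end OddExtension

section OddExtensionCocycle

variable {K A : Type*} [Field K] [AddCommGroup A] [Module K A]

/-- The cocycle `c(u, v) = ω(𝒟u, v) + (-1)^{p(u)} ω(u, 𝒟v)` on `𝔞 ⊕ 𝕂e`, extended by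
`c(e, a) = c(a, e) = ω(a₀, a)` and `c(e, e) = 0`. -/
def oddExtCocycle (ωA : A → A → K) (D σ : A →ₗ[K] A) (a₀ : A) : A × K → A × K → K :=
  fun p q => ωA (D p.1) q.1 + ωA (σ p.1) (D q.1) + p.2 * ωA a₀ q.1 + q.2 * ωA a₀ p.1

variable {subA : Bool → Submodule K A} {brA : A → A → A} {ωA : A → A → K} {D σ : A →ₗ[K] A}
  {a₀ : A}

theorem oddExtCocycle_inl_inl (a b : A) :
    oddExtCocycle ωA D σ a₀ (a, 0) (b, 0) = ωA (D a) b + ωA (σ a) (D b) := by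
  simp [oddExtCocycle]

theorem oddExtCocycle_inl_e (hω : IsBilinMap K A K ωA) (a : A) :
    oddExtCocycle ωA D σ a₀ (a, 0) (0, 1) = ωA a₀ a := by
  simp [oddExtCocycle, hω.map_zero_right]

theorem oddExtCocycle_e_inl (hω : IsBilinMap K A K ωA) (a : A) :
    oddExtCocycle ωA D σ a₀ (0, 1) (a, 0) = ωA a₀ a := by
  simp [oddExtCocycle, hω.map_zero_left]

theorem oddExtCocycle_e_e (hω : IsBilinMap K A K ωA) :
    oddExtCocycle ωA D σ a₀ (0, 1) (0, 1) = 0 := by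
  simp [oddExtCocycle, hω.map_zero_left, hω.map_zero_right]

theorem cocycleSum_oddExtCocycle_inl_inl_inl_eq_zero (hD : IsOddDerivation subA brA D)
    (hσ : IsParityInvolution subA σ) (hω : IsBilinMap K A K ωA)
    (hclosed : IsClosedForm K A subA brA ωA) {i j k : Bool} {a b c : A} (ha : a ∈ subA i)
    (hb : b ∈ subA j) (hc : c ∈ subA k) :
    cocycleSum K (oddExtBr brA D σ a₀) (oddExtCocycle ωA D σ a₀) i j k (a, 0) (b, 0) (c, 0)
      = 0 := by
  have H₁ := hclosed _ j k _ (hD.map_mem i a ha) b hb c hc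
  have H₂ := hclosed i _ k a ha _ (hD.map_mem j b hb) c hc
  have H₃ := hclosed i j _ a ha b hb _ (hD.map_mem k c hc)
  simp only [cocycleSum, oddExtBr_inl_inl, oddExtCocycle_inl_inl, hσ i a ha, hσ j b hb,
    hσ k c hc, hD.leibniz i a ha, hD.leibniz j b hb, hD.leibniz k c hc, hω.2.1, hω.2.2.1,
    hω.2.2.2, smul_eq_mul]
  linear_combination (norm := skip)
    ssign K true k * H₁ + ssign K true i * H₂ + ssign K true j * H₃
  cases i <;> cases j <;> cases k <;>
    simp only [ssign_false_left, ssign_false_right, ssign_true_true, Bool.not_false,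
      Bool.not_true] <;> ring

/-- The only triples where the condition on `𝒟² - 𝒟*²` enters. -/
theorem cocycleSum_oddExtCocycle_inl_inl_e_eq_zero (hLie : IsLieSuperAlg K A subA brA)
    (hD : IsOddDerivation subA brA D) (hσ : IsParityInvolution subA σ)
    (hω : IsBilinMap K A K ωA) (hodd : IsOddForm K A subA ωA) (hswap : ∀ x y, ωA y x = -ωA x y)
    (hΩ : ∀ a, ∀ j, ∀ b ∈ subA j, ωA a₀ (brA a b) = ωA (D (D a)) b + ωA a (D (D b)))
    {i j : Bool} {a b : A} (ha : a ∈ subA i) (hb : b ∈ subA j) :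
    cocycleSum K (oddExtBr brA D σ a₀) (oddExtCocycle ωA D σ a₀) i j true (a, 0) (b, 0) (0, 1)
      = 0 := by
  have hbr := hLie.bilin
  have hDa := hD.map_mem i a ha
  have hDb := hD.map_mem j b hb
  have hDDa := hD.map_mem _ _ hDa
  have hDDb := hD.map_mem _ _ hDb
  simp only [Bool.not_not] at hDDa hDDb
  simp only [cocycleSum, oddExtBr_inl_inl, oddExtBr_inl_e hbr, oddExtBr_e_inl hbr,
    oddExtCocycle_inl_inl, oddExtCocycle_e_inl hω, hσ i a ha, hσ j b hb, map_neg, map_smul,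
    hΩ a j b hb, hω.2.1, hω.2.2.2, hω.map_neg_right, smul_eq_mul]
  rw [hswap (D a) (D b), hswap (D (D a)) b]
  cases i <;> cases j
  · simp [hodd _ _ hDa _ hDb, hodd _ _ hDDa _ hb, hodd _ _ ha _ hDDb]
  · simp only [ssign_false_left, ssign_false_right, ssign_true_true]; ring
  · simp only [ssign_false_left, ssign_false_right, ssign_true_true]; ring
  · simp [hodd _ _ hDa _ hDb, hodd _ _ hDDa _ hb, hodd _ _ ha _ hDDb]

theorem isBilinMap_oddExtCocycle (hω : IsBilinMap K A K ωA) :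
    IsBilinMap K (A × K) K (oddExtCocycle ωA D σ a₀) := by
  obtain ⟨hadd_l, hsmul_l, hadd_r, hsmul_r⟩ := hω
  refine ⟨fun x y z => ?_, fun c x y => ?_, fun x y z => ?_, fun c x y => ?_⟩ <;>
    simp only [oddExtCocycle, Prod.fst_add, Prod.snd_add, Prod.smul_fst, Prod.smul_snd, hadd_l,
      hsmul_l, hadd_r, hsmul_r, map_add, map_smul, smul_eq_mul] <;> ring

theorem isClosedForm_oddExtCocycle (hLie : IsLieSuperAlg K A subA brA)
    (hD : IsOddDerivation subA brA D) (hσ : IsParityInvolution subA σ) (ha₀ : a₀ ∈ subA false)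
    (hDa₀ : D a₀ = 0) (hω : IsBilinMap K A K ωA) (hodd : IsOddForm K A subA ωA)
    (hswap : ∀ x y, ωA y x = -ωA x y) (hclosed : IsClosedForm K A subA brA ωA)
    (hωa₀D : ∀ i, ∀ f ∈ subA i, ωA a₀ (D f) = 0)
    (hΩ : ∀ a, ∀ j, ∀ b ∈ subA j, ωA a₀ (brA a b) = ωA (D (D a)) b + ωA a (D (D b))) :
    IsClosedForm K (A × K) (oddExtSub subA) (oddExtBr brA D σ a₀) (oddExtCocycle ωA D σ a₀) := by
  have hbr := hLie.bilin
  have hbr' := isBilinMap_oddExtBr (D := D) (σ := σ) (a₀ := a₀) hbr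
  have hc := isBilinMap_oddExtCocycle (D := D) (σ := σ) (a₀ := a₀) hω
  refine forall_oddExtSub_eq_zero (cocycleSum_add_left hbr' hc) (cocycleSum_smul_left hbr' hc)
    cocycleSum_cyclic
    (fun _ _ _ _ ha _ hb _ hc =>
      cocycleSum_oddExtCocycle_inl_inl_inl_eq_zero hD hσ hω hclosed ha hb hc)
    (fun _ _ _ ha _ hb =>
      cocycleSum_oddExtCocycle_inl_inl_e_eq_zero hLie hD hσ hω hodd hswap hΩ ha hb) ?_ ?_
  · intro i a ha
    simp only [oddExtBr_inl_e hbr, oddExtBr_e_inl hbr, oddExtBr_e_e hbr,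
      oddExtCocycle_inl_inl, oddExtCocycle_e_inl hω, hσ i a ha, map_smul, hDa₀,
      hω.2.2.2, hω.map_neg_right, hω.map_zero_right, hswap a₀ (D a), hωa₀D i a ha]
    simp
  · simp only [oddExtBr_e_e hbr, oddExtCocycle_e_inl hω, hω.2.2.2, hodd _ _ ha₀ _ ha₀]
    simp

theorem isSuperSkew_oddExtCocycle (hD : IsOddDerivation subA brA D)
    (hσ : IsParityInvolution subA σ) (ha₀ : a₀ ∈ subA false) (hω : IsBilinMap K A K ωA)
    (hodd : IsOddForm K A subA ωA) (hswap : ∀ x y, ωA y x = -ωA x y) :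
    IsSuperSkew K (A × K) (oddExtSub subA) (oddExtCocycle ωA D σ a₀) := by
  rintro i j ⟨a, t⟩ hx ⟨b, u⟩ hy
  obtain ⟨ha, ht⟩ := mem_oddExtSub.1 hx
  obtain ⟨hb, hu⟩ := mem_oddExtSub.1 hy
  simp only [oddExtCocycle, hσ i a ha, hσ j b hb, hω.2.1]
  rw [hswap (D b) a, hswap (D a) b]
  cases i <;> cases j <;> simp only [true_implies, Bool.true_eq_false, false_implies] at ht hu <;>
    subst_vars
  · simp
  · simp [hodd _ _ (hD.map_mem _ _ ha) _ hb, hodd _ _ ha₀ _ ha]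
  · simp [hodd _ _ (hD.map_mem _ _ hb) _ ha, hodd _ _ ha₀ _ hb]
  · simp only [ssign_true_true]; ring

theorem isEvenForm_oddExtCocycle (hD : IsOddDerivation subA brA D)
    (hσ : IsParityInvolution subA σ) (ha₀ : a₀ ∈ subA false) (hω : IsBilinMap K A K ωA)
    (hodd : IsOddForm K A subA ωA) :
    IsEvenForm K (A × K) (oddExtSub subA) (oddExtCocycle ωA D σ a₀) := by
  rintro ⟨a, t⟩ ⟨b, u⟩ (⟨hx, hy⟩ | ⟨hx, hy⟩)
  · obtain ⟨ha, ht⟩ := mem_oddExtSub.1 hx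
    obtain ⟨hb, -⟩ := mem_oddExtSub.1 hy
    obtain rfl : t = 0 := ht rfl
    simp [oddExtCocycle, hσ false a ha, hodd _ _ (hD.map_mem _ _ ha) _ hb,
      hodd _ _ ha _ (hD.map_mem _ _ hb), hodd _ _ ha₀ _ ha]
  · obtain ⟨ha, -⟩ := mem_oddExtSub.1 hx
    obtain ⟨hb, hu⟩ := mem_oddExtSub.1 hy
    obtain rfl : u = 0 := hu rfl
    simp [oddExtCocycle, hσ true a ha, hω.map_neg_left, hodd _ _ (hD.map_mem _ _ ha) _ hb,
      hodd _ _ ha _ (hD.map_mem _ _ hb), hodd _ _ ha₀ _ hb]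

theorem oddExtCocycle_oddExtBr_self_eq_zero (hLie : IsLieSuperAlg K A subA brA)
    (hD : IsOddDerivation subA brA D) (hσ : IsParityInvolution subA σ) (ha₀ : a₀ ∈ subA false)
    (hDa₀ : D a₀ = 0) (hω : IsBilinMap K A K ωA) (hodd : IsOddForm K A subA ωA)
    (hclosed : IsClosedForm K A subA brA ωA)
    (hΩ : ∀ a, ∀ j, ∀ b ∈ subA j, ωA a₀ (brA a b) = ωA (D (D a)) b + ωA a (D (D b)))
    {f : A × K} (hf : f ∈ oddExtSub subA true) :
    oddExtCocycle ωA D σ a₀ f (oddExtBr brA D σ a₀ f f) = 0 := by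
  obtain ⟨a, t⟩ := f
  obtain ⟨ha, -⟩ := mem_oddExtSub.1 hf
  have hDa := hD.map_mem true a ha
  have hDDa := hD.map_mem _ _ hDa
  have H := hclosed false true true (D a) hDa a ha a ha
  have haDa := hLie.antisymm _ _ _ ha _ hDa
  have hΩa := hΩ a true a ha
  simp only [oddExtCocycle, oddExtBr, hσ true a ha, map_add, map_sub, map_smul, hDa₀,
    hD.leibniz true a ha, hω.2.1, hω.2.2.1, hω.2.2.2, hω.map_neg_right, hω.map_sub_right,
    hω.map_zero_right, hodd _ _ hDa _ hDa, hodd _ _ hDa _ ha₀, hodd _ _ ha₀ _ hDa,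
    hodd _ _ ha₀ _ ha₀, hodd _ _ ha _ hDDa, hodd _ _ hDDa _ ha, hΩa, haDa] at H ⊢
  simp only [ssign_false_left, ssign_false_right, ssign_true_true, Bool.not_true] at H ⊢
  linear_combination H

end OddExtensionCocycle

section DoubleExtensionBracket

variable {K A : Type*} [Field K] [AddCommGroup A] [Module K A]

/-- The bracket of `𝕂x ⊕ 𝔞 ⊕ 𝕂e` in coordinates `(s, a, t) = s x + a + t e`. -/
def doddExtBr (brA : A → A → A) (ωA : A → A → K) (D σ : A →ₗ[K] A) (a₀ : A) :
    K × A × K → K × A × K → K × A × K :=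
  centralExtBr (oddExtBr brA D σ a₀) (oddExtCocycle ωA D σ a₀)

variable {subA : Bool → Submodule K A} {brA : A → A → A} {ωA : A → A → K} {D σ : A →ₗ[K] A}
  {a₀ : A}

theorem dblSub_eq_centralExtSub : dblSub K A subA false true = centralExtSub (oddExtSub subA) :=
  rfl

theorem isLieSuperAlg_doddExtBr (hLie : IsLieSuperAlg K A subA brA)
    (hD : IsOddDerivation subA brA D) (hσ : IsParityInvolution subA σ) (ha₀ : a₀ ∈ subA false)
    (hDD : ∀ a, D (D a) = brA a₀ a) (hDa₀ : D a₀ = 0) (hω : IsBilinMap K A K ωA)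
    (hodd : IsOddForm K A subA ωA) (hswap : ∀ x y, ωA y x = -ωA x y)
    (hclosed : IsClosedForm K A subA brA ωA) (hωa₀D : ∀ i, ∀ f ∈ subA i, ωA a₀ (D f) = 0)
    (hΩ : ∀ a, ∀ j, ∀ b ∈ subA j, ωA a₀ (brA a b) = ωA (D (D a)) b + ωA a (D (D b))) :
    IsLieSuperAlg K (K × A × K) (dblSub K A subA false true) (doddExtBr brA ωA D σ a₀) := by
  rw [dblSub_eq_centralExtSub]
  exact isLieSuperAlg_centralExt (isLieSuperAlg_oddExt hLie hD hσ ha₀ hDD hDa₀)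
    (isBilinMap_oddExtCocycle hω) (isSuperSkew_oddExtCocycle hD hσ ha₀ hω hodd hswap)
    (isEvenForm_oddExtCocycle hD hσ ha₀ hω hodd)
    (isClosedForm_oddExtCocycle hLie hD hσ ha₀ hDa₀ hω hodd hswap hclosed hωa₀D hΩ)
    fun _ _ hf => oddExtCocycle_oddExtBr_self_eq_zero hLie hD hσ ha₀ hDa₀ hω hodd hclosed hΩ hf

end DoubleExtensionBracket

section DoubleExtensionForm

variable {K A : Type*} [Field K] {ωA : A → A → K}

theorem dblFormMinus_swap (hswap : ∀ x y, ωA y x = -ωA x y) (x y : K × A × K) :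
    dblFormMinus K A ωA y x = -dblFormMinus K A ωA x y := by
  simp only [dblFormMinus, hswap x.2.1]; ring

variable [AddCommGroup A] [Module K A] {subA : Bool → Submodule K A} {brA : A → A → A}
  {D σ : A →ₗ[K] A} {a₀ : A}

theorem isBilinMap_dblFormMinus (hω : IsBilinMap K A K ωA) :
    IsBilinMap K (K × A × K) K (dblFormMinus K A ωA) := by
  obtain ⟨hadd_l, hsmul_l, hadd_r, hsmul_r⟩ := hω
  refine ⟨fun x y z => ?_, fun c x y => ?_, fun x y z => ?_, fun c x y => ?_⟩ <;>
    simp only [dblFormMinus, Prod.fst_add, Prod.snd_add, Prod.smul_fst, Prod.smul_snd, hadd_l,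
      hsmul_l, hadd_r, hsmul_r, smul_eq_mul] <;> ring

theorem isOddForm_dblFormMinus (hodd : IsOddForm K A subA ωA) :
    IsOddForm K (K × A × K) (dblSub K A subA false true) (dblFormMinus K A ωA) := by
  rintro (_ | _) ⟨s, a, t⟩ hx ⟨s', b, t'⟩ hy <;>
    simp only [dblSub, ↓reduceIte, Bool.false_eq_true, Bool.true_eq_false, Submodule.mem_prod,
      Submodule.mem_top, Submodule.mem_bot, true_and, and_true] at hx hy
  · simp [dblFormMinus, hx.2, hy.2, hodd _ _ hx.1 _ hy.1]
  · simp [dblFormMinus, hx.1, hy.1, hodd _ _ hx.2 _ hy.2]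

theorem isNondegForm_dblFormMinus (hω : IsBilinMap K A K ωA) (hnondeg : IsNondegForm K A ωA) :
    IsNondegForm K (K × A × K) (dblFormMinus K A ωA) := by
  rintro ⟨s, a, t⟩ h
  have ha : a = 0 := hnondeg a fun b => by simpa [dblFormMinus] using h (0, b, 0)
  have ht : t = 0 := by simpa [dblFormMinus, ha, hω.map_zero_left] using h (1, 0, 0)
  have hs : s = 0 := by simpa [dblFormMinus, ha, hω.map_zero_left] using h (0, 0, 1)
  simp [ha, hs, ht]

theorem cocycleSum_dblFormMinus_eq (i j k : Bool) (u v w : K × A × K) :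
    cocycleSum K (doddExtBr brA ωA D σ a₀) (dblFormMinus K A ωA) i j k u v w =
      cocycleSum K (doddExtBr brA ωA D σ a₀) (dblFormMinus K A ωA) i j k
        (0, u.2) (0, v.2) (0, w.2) := by
  simp [cocycleSum, doddExtBr, centralExtBr, dblFormMinus, oddExtBr]

theorem cocycleSum_dblFormMinus_inl_inl_e_eq_zero (hLie : IsLieSuperAlg K A subA brA)
    (hD : IsOddDerivation subA brA D) (hσ : IsParityInvolution subA σ)
    (hω : IsBilinMap K A K ωA) (hodd : IsOddForm K A subA ωA) (hswap : ∀ x y, ωA y x = -ωA x y)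
    {i j : Bool} {a b : A} (ha : a ∈ subA i) (hb : b ∈ subA j) :
    cocycleSum K (doddExtBr brA ωA D σ a₀) (dblFormMinus K A ωA) i j true
      (0, a, 0) (0, b, 0) (0, 0, 1) = 0 := by
  have hbr := hLie.bilin
  simp only [cocycleSum, dblFormMinus, doddExtBr, centralExtBr, oddExtBr_inl_inl,
    oddExtBr_inl_e hbr, oddExtBr_e_inl hbr, oddExtCocycle_inl_inl, hσ i a ha, hσ j b hb,
    map_smul, hω.2.1, hω.2.2.2, hω.map_neg_right, hω.map_zero_left, hswap (D a) b, smul_eq_mul]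
  cases i <;> cases j
  · simp
  · simp [hodd _ _ (hD.map_mem _ _ ha) _ hb]
  · simp [hodd _ _ (hD.map_mem _ _ ha) _ hb]
  · simp

theorem isClosedForm_dblFormMinus (hLie : IsLieSuperAlg K A subA brA)
    (hD : IsOddDerivation subA brA D) (hσ : IsParityInvolution subA σ) (ha₀ : a₀ ∈ subA false)
    (hω : IsBilinMap K A K ωA) (hodd : IsOddForm K A subA ωA) (hswap : ∀ x y, ωA y x = -ωA x y)
    (hclosed : IsClosedForm K A subA brA ωA) :
    IsClosedForm K (K × A × K) (dblSub K A subA false true) (doddExtBr brA ωA D σ a₀)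
      (dblFormMinus K A ωA) := by
  have hbr := hLie.bilin
  have hbrG : IsBilinMap K _ _ (doddExtBr brA ωA D σ a₀) :=
    isBilinMap_centralExtBr (isBilinMap_oddExtBr hbr) (isBilinMap_oddExtCocycle hω)
  have hωG := isBilinMap_dblFormMinus hω
  intro i j k u hu v hv w hw
  change cocycleSum K _ _ i j k u v w = 0
  rw [cocycleSum_dblFormMinus_eq]
  refine forall_oddExtSub_eq_zero
    (T := fun i j k h₁ h₂ h₃ => cocycleSum K (doddExtBr brA ωA D σ a₀) (dblFormMinus K A ωA)
      i j k (0, h₁) (0, h₂) (0, h₃))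
    (fun i j k x x' y z => ?_) (fun i j k c x y z => ?_) (fun _ _ _ _ _ _ => cocycleSum_cyclic ..)
    ?_ (fun _ _ _ ha _ hb =>
      cocycleSum_dblFormMinus_inl_inl_e_eq_zero hLie hD hσ hω hodd hswap ha hb)
    ?_ ?_ i j k _ (Submodule.mem_prod.1 hu).2 _ (Submodule.mem_prod.1 hv).2 _
    (Submodule.mem_prod.1 hw).2
  · rw [← cocycleSum_add_left hbrG hωG]; congr 1; simp
  · rw [← cocycleSum_smul_left hbrG hωG]; congr 1; simp
  · intro i j k a ha b hb c hc
    simpa [cocycleSum, dblFormMinus, doddExtBr, centralExtBr, oddExtBr_inl_inl] using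
      hclosed i j k a ha b hb c hc
  · intro i a ha
    simp only [cocycleSum, dblFormMinus, doddExtBr, centralExtBr, oddExtBr_inl_e hbr,
      oddExtBr_e_inl hbr, oddExtBr_e_e hbr, oddExtCocycle_inl_e hω, oddExtCocycle_e_inl hω,
      hω.2.2.2, hω.map_zero_left, hswap a₀ a, smul_eq_mul]
    cases i
    · simp [hodd _ _ ha₀ _ ha]
    · simp only [ssign_true_true]; ring
  · simp [cocycleSum, dblFormMinus, doddExtBr, centralExtBr, oddExtBr_e_e hbr,
      oddExtCocycle_e_e hω, hω.map_zero_left]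

end DoubleExtensionForm

theorem doddExtension_periplectic_general
    (K A : Type*) [Field K] [AddCommGroup A] [Module K A]
    (subA : Bool → Submodule K A) (brA : A → A → A) (ωA : A → A → K)
    (hLie : IsLieSuperAlg K A subA brA)
    (hQF : IsQuasiFrobenius K A subA brA ωA)
    (hOdd : IsOddForm K A subA ωA)
    (D Ds : A → A)
    (hDadd : ∀ a b : A, D (a + b) = D a + D b)
    (hDsmul : ∀ (c : K) (a : A), D (c • a) = c • D a)
    (hDodd : ∀ i : Bool, ∀ a ∈ subA i, D a ∈ subA (!i))
    (hDder : ∀ i : Bool, ∀ f ∈ subA i, ∀ g : A,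
      D (brA f g) = brA (D f) g + ssign K i true • brA f (D g))
    (hDs : ∀ i : Bool, ∀ f ∈ subA i, ∀ g : A, ωA (D f) g = ssign K i true * ωA f (Ds g))
    (a₀ : A) (ha₀even : a₀ ∈ subA false)
    (hDD : ∀ a : A, D (D a) = brA a₀ a)
    (hDa₀ : D a₀ = 0) (hDsa₀ : Ds a₀ = 0)
    (hΩ : ∀ a b : A, ωA (D (D a) - Ds (Ds a)) b = ωA a₀ (brA a b)) :
    ∃ brG : K × A × K → K × A × K → K × A × K,
      IsLieSuperAlg K (K × A × K) (dblSub K A subA false true) brG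
      -- the defining brackets: `x = (1,0,0)` even, `e = (0,0,1)` odd, `[x, 𝔤] = 0`,
      -- `[a,b] = [a,b]_𝔞 + (ω_𝔞(𝒟a, b) + (−1)^{p(a)} ω_𝔞(a, 𝒟b))·x`,
      -- `[e,e] = 2a₀`, `[e,a] = 𝒟a + ω_𝔞(a₀, a)·x`
      ∧ (∀ g : K × A × K, brG (1, 0, 0) g = 0)
      ∧ (∀ i : Bool, ∀ a ∈ subA i, ∀ b : A,
          brG (0, a, 0) (0, b, 0) = (ωA (D a) b + ssign K i true * ωA a (D b), brA a b, 0))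
      ∧ brG (0, 0, 1) (0, 0, 1) = (0, (2 : K) • a₀, 0)
      ∧ (∀ a : A, brG (0, 0, 1) (0, a, 0) = (ωA a₀ a, D a, 0))
      -- the periplectic form
      ∧ IsBilinMap K (K × A × K) K (dblFormMinus K A ωA)
      ∧ IsSuperSkew K (K × A × K) (dblSub K A subA false true) (dblFormMinus K A ωA)
      ∧ IsClosedForm K (K × A × K) (dblSub K A subA false true) brG (dblFormMinus K A ωA)
      ∧ IsNondegForm K (K × A × K) (dblFormMinus K A ωA)
      ∧ IsOddForm K (K × A × K) (dblSub K A subA false true) (dblFormMinus K A ωA) := by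
  obtain ⟨hω, hskew, hclosed, hnondeg⟩ := hQF
  have hswap := hOdd.apply_swap hskew hLie.compl hω
  obtain ⟨Dₗ, rfl⟩ : ∃ Dₗ : A →ₗ[K] A, ⇑Dₗ = D := ⟨⟨⟨D, hDadd⟩, hDsmul⟩, rfl⟩
  have hD : IsOddDerivation subA brA Dₗ := ⟨hDodd, hDder⟩
  obtain ⟨σ, hσ⟩ : ∃ σ, IsParityInvolution subA σ :=
    ⟨_, isParityInvolution_parityInvolution hLie.compl⟩
  have hΩ' : ∀ a, ∀ j, ∀ b ∈ subA j, ωA a₀ (brA a b) = ωA (Dₗ (Dₗ a)) b + ωA a (Dₗ (Dₗ b)) :=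
    fun a j b hb => by
      rw [← hΩ, hω.map_sub_left, adjoint_adjoint_eq_neg hDodd hDs hswap a hb, sub_neg_eq_add]
  have hbr := hLie.bilin
  refine ⟨doddExtBr brA ωA Dₗ σ a₀, isLieSuperAlg_doddExtBr hLie hD hσ ha₀even hDD hDa₀ hω hOdd
    hswap hclosed (fun _ _ => apply_map_eq_zero_of_adjoint_eq_zero hω hDs hswap hDsa₀) hΩ',
    fun g => ?_, fun i a ha b => ?_, ?_, fun a => ?_, isBilinMap_dblFormMinus hω,
    (isOddForm_dblFormMinus hOdd).isSuperSkew (dblFormMinus_swap hswap),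
    isClosedForm_dblFormMinus hLie hD hσ ha₀even hω hOdd hswap hclosed,
    isNondegForm_dblFormMinus hω hnondeg, isOddForm_dblFormMinus hOdd⟩
  · simp [doddExtBr, centralExtBr, oddExtBr, oddExtCocycle, hω.map_zero_left, hω.map_zero_right,
      hbr.map_zero_left]
  · simp [doddExtBr, centralExtBr, oddExtBr_inl_inl, oddExtCocycle_inl_inl, hσ i a ha, hω.2.1]
  · simp [doddExtBr, centralExtBr, oddExtBr_e_e hbr, oddExtCocycle_e_e hω]
  · simp [doddExtBr, centralExtBr, oddExtBr_e_inl hbr, oddExtCocycle_e_inl hω]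

/-- The `𝒟`-odd double extension of a periplectic quasi-Frobenius Lie
superalgebra `(𝔞, ω_𝔞)` by an odd derivation `𝒟` (with adjoint `𝒟*`) and an even
`a₀ ∈ 𝔞` with `𝒟² = ad_{a₀}`, `𝒟(a₀) = 𝒟*(a₀) = 0` and the coboundary condition,
carries a Lie superalgebra structure (with `x` even and `e` odd) on `𝕂x ⊕ 𝔞 ⊕ 𝕂e` with
the stated brackets, and the stated odd form is closed, anti-symmetric and
non-degenerate, i.e. the result is a periplectic quasi-Frobenius Lie superalgebra. -/
theorem doddExtension_periplectic
    (K A : Type*) [Field K] [AddCommGroup A] [Module K A]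
    (hchar : ringChar K ≠ 2)
    (subA : Bool → Submodule K A) (brA : A → A → A) (ωA : A → A → K)
    (hLie : IsLieSuperAlg K A subA brA)
    (hQF : IsQuasiFrobenius K A subA brA ωA)
    (hOdd : IsOddForm K A subA ωA)
    (D Ds : A → A)
    (hDadd : ∀ a b : A, D (a + b) = D a + D b)
    (hDsmul : ∀ (c : K) (a : A), D (c • a) = c • D a)
    (hDodd : ∀ i : Bool, ∀ a ∈ subA i, D a ∈ subA (!i))
    (hDder : ∀ i : Bool, ∀ f ∈ subA i, ∀ g : A,
      D (brA f g) = brA (D f) g + ssign K i true • brA f (D g))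
    (hDsadd : ∀ a b : A, Ds (a + b) = Ds a + Ds b)
    (hDssmul : ∀ (c : K) (a : A), Ds (c • a) = c • Ds a)
    (hDs : ∀ i : Bool, ∀ f ∈ subA i, ∀ g : A, ωA (D f) g = ssign K i true * ωA f (Ds g))
    (a₀ : A) (ha₀even : a₀ ∈ subA false)
    (hDD : ∀ a : A, D (D a) = brA a₀ a)
    (hDa₀ : D a₀ = 0) (hDsa₀ : Ds a₀ = 0)
    (hΩ : ∀ a b : A, ωA (D (D a) - Ds (Ds a)) b = ωA a₀ (brA a b)) :
    ∃ brG : K × A × K → K × A × K → K × A × K,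
      IsLieSuperAlg K (K × A × K) (dblSub K A subA false true) brG
      -- the defining brackets: `x = (1,0,0)` even, `e = (0,0,1)` odd, `[x, 𝔤] = 0`,
      -- `[a,b] = [a,b]_𝔞 + (ω_𝔞(𝒟a, b) + (−1)^{p(a)} ω_𝔞(a, 𝒟b))·x`,
      -- `[e,e] = 2a₀`, `[e,a] = 𝒟a + ω_𝔞(a₀, a)·x`
      ∧ (∀ g : K × A × K, brG (1, 0, 0) g = 0)
      ∧ (∀ i : Bool, ∀ a ∈ subA i, ∀ b : A,
          brG (0, a, 0) (0, b, 0) = (ωA (D a) b + ssign K i true * ωA a (D b), brA a b, 0))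
      ∧ brG (0, 0, 1) (0, 0, 1) = (0, (2 : K) • a₀, 0)
      ∧ (∀ a : A, brG (0, 0, 1) (0, a, 0) = (ωA a₀ a, D a, 0))
      -- the periplectic form
      ∧ IsBilinMap K (K × A × K) K (dblFormMinus K A ωA)
      ∧ IsSuperSkew K (K × A × K) (dblSub K A subA false true) (dblFormMinus K A ωA)
      ∧ IsClosedForm K (K × A × K) (dblSub K A subA false true) brG (dblFormMinus K A ωA)
      ∧ IsNondegForm K (K × A × K) (dblFormMinus K A ωA)
      ∧ IsOddForm K (K × A × K) (dblSub K A subA false true) (dblFormMinus K A ωA) :=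
  doddExtension_periplectic_general K A subA brA ωA hLie hQF hOdd D Ds hDadd hDsmul hDodd hDder hDs
    a₀ ha₀even hDD hDa₀ hDsa₀ hΩ
end
end
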